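/- arXiv:2002.07892 — 7 statements merged into one kernel-verified Lean document; each statement's English description precedes it below -/
import Mathlib

section
/- Let (X,d) be a metric space, n ≥ 1, and p ≥ 1 a real number. For all tuples x, y, z : Fin n → X, the p-cost Earth Mover's distance satisfies the triangle inequality: EMD_p(x,z) ≤ EMD_p(x,y) + EMD_p(y,z). -/
/-- The `p`-cost Earth Mover's distance between two `n`-tuples of points of a metric
space: the minimum over permutations `π` of `Fin n` of
`(∑ t, dist (x t) (y (π t)) ^ p) ^ (1/p)`. -/
noncomputable def EMDp {X : Type*} [MetricSpace X] {n : ℕ} (p : ℝ) (x y : Fin n → X) : ℝ :=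
  Finset.univ.inf' ⟨1, Finset.mem_univ 1⟩
    (fun π : Equiv.Perm (Fin n) => (∑ t, dist (x t) (y (π t)) ^ p) ^ (1 / p))

/-- The `p`-cost Earth Mover's distance satisfies the triangle inequality. -/
theorem EMDp_triangle {X : Type*} [MetricSpace X] {n : ℕ} (hn : 1 ≤ n)
    {p : ℝ} (hp : 1 ≤ p) (x y z : Fin n → X) :
    EMDp p x z ≤ EMDp p x y + EMDp p y z := by
  have hp0 : 0 < p := lt_of_lt_of_le one_pos hp
  obtain ⟨σ, -, hσ⟩ := Finset.exists_mem_eq_inf' (⟨1, Finset.mem_univ 1⟩ :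
      (Finset.univ : Finset (Equiv.Perm (Fin n))).Nonempty)
      (fun π : Equiv.Perm (Fin n) => (∑ t, dist (x t) (y (π t)) ^ p) ^ (1 / p))
  obtain ⟨τ, -, hτ⟩ := Finset.exists_mem_eq_inf' (⟨1, Finset.mem_univ 1⟩ :
      (Finset.univ : Finset (Equiv.Perm (Fin n))).Nonempty)
      (fun π : Equiv.Perm (Fin n) => (∑ t, dist (y t) (z (π t)) ^ p) ^ (1 / p))
  have key : EMDp p x z ≤ (∑ t, dist (x t) (z ((τ * σ) t)) ^ p) ^ (1 / p) :=
    Finset.inf'_le _ (Finset.mem_univ (τ * σ))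
  refine key.trans ?_
  have step1 : (∑ t, dist (x t) (z ((τ * σ) t)) ^ p) ^ (1 / p) ≤
      (∑ t, (dist (x t) (y (σ t)) + dist (y (σ t)) (z (τ (σ t)))) ^ p) ^ (1 / p) := by
    apply Real.rpow_le_rpow (Finset.sum_nonneg fun t _ =>
      Real.rpow_nonneg dist_nonneg p)
    · refine Finset.sum_le_sum fun t _ => Real.rpow_le_rpow dist_nonneg ?_ hp0.le
      exact dist_triangle _ _ _
    · positivity
  refine step1.trans ?_
  have mink := Real.Lp_add_le_of_nonneg (s := Finset.univ)
    (f := fun t => dist (x t) (y (σ t))) (g := fun t => dist (y (σ t)) (z (τ (σ t)))) hp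
    (fun t _ => dist_nonneg) (fun t _ => dist_nonneg)
  refine mink.trans (add_le_add ?_ ?_)
  · exact le_of_eq hσ.symm
  · refine le_of_eq (Eq.trans ?_ hτ.symm)
    congr 1
    exact Equiv.sum_comp σ (fun t => dist (y t) (z (τ t)) ^ p)
end

section
/- Let (X,d) be a metric space, ℓ, n ≥ 1, p ≥ 1 a real number, a : Fin ℓ → Fin n → X a colored point configuration, and c : Fin n → X an aligned fair clustering of p-cost OPT := (Σ_{j : Fin ℓ} Σ_{t : Fin n} d(a j t, c t)^p)^{1/p}. Then there exists a color i : Fin ℓ such that (Σ_{j : Fin ℓ} EMD_p(a i, a j)^p)^{1/p} ≤ 2·OPT. -/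
/-!
Let `i` be a color whose cost `D i = ∑ t, d(a i t, c t)^p` is minimal, so `ℓ · D i ≤ OPT^p`.
Matching `a i` to `a j` by the identity bounds `EMD_p(a i, a j)^p` by `∑ t, d(a i t, a j t)^p`,
and Minkowski's inequality over `Fin ℓ × Fin n` for `d(a i t, a j t) ≤ d(a i t, c t) + d(c t, a j t)`
gives `(∑ j, ∑ t, d(a i t, a j t)^p)^(1/p) ≤ (ℓ · D i)^(1/p) + OPT ≤ 2 · OPT`.
-/

open Finset

section

variable {X : Type*} [MetricSpace X]

theorem Lp_dist_triangle {ι : Type*} (s : Finset ι) {p : ℝ} (hp : 1 ≤ p) (f g h : ι → X) :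
    (∑ k ∈ s, dist (f k) (h k) ^ p) ^ (1 / p) ≤
      (∑ k ∈ s, dist (f k) (g k) ^ p) ^ (1 / p) + (∑ k ∈ s, dist (g k) (h k) ^ p) ^ (1 / p) := by
  have hp0 : 0 ≤ p := zero_le_one.trans hp
  calc (∑ k ∈ s, dist (f k) (h k) ^ p) ^ (1 / p)
      ≤ (∑ k ∈ s, (dist (f k) (g k) + dist (g k) (h k)) ^ p) ^ (1 / p) := by
        gcongr with k
        exact dist_triangle _ _ _
    _ ≤ _ := Real.Lp_add_le_of_nonneg s hp (fun _ _ => dist_nonneg) (fun _ _ => dist_nonneg)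

theorem EMDp_le_sum_dist_rpow {n : ℕ} (p : ℝ) (x y : Fin n → X) :
    EMDp p x y ≤ (∑ t, dist (x t) (y t) ^ p) ^ (1 / p) :=
  inf'_le (fun π : Equiv.Perm (Fin n) => (∑ t, dist (x t) (y (π t)) ^ p) ^ (1 / p)) (mem_univ 1)

theorem EMDp_nonneg {n : ℕ} (p : ℝ) (x y : Fin n → X) : 0 ≤ EMDp p x y :=
  le_inf' _ _ fun _ _ => by positivity

theorem EMDp_rpow_le_sum_dist_rpow {n : ℕ} {p : ℝ} (hp : 0 < p) (x y : Fin n → X) :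
    EMDp p x y ^ p ≤ ∑ t, dist (x t) (y t) ^ p := by
  calc EMDp p x y ^ p ≤ ((∑ t, dist (x t) (y t) ^ p) ^ (1 / p)) ^ p := by
        gcongr
        · exact EMDp_nonneg p x y
        · exact EMDp_le_sum_dist_rpow p x y
    _ = ∑ t, dist (x t) (y t) ^ p := by
        rw [← Real.rpow_mul (by positivity), one_div_mul_cancel hp.ne', Real.rpow_one]

theorem sum_dist_rpow_le_two_mul_of_card_mul_le {ℓ n : ℕ} {p : ℝ} (hp : 1 ≤ p)
    (a : Fin ℓ → Fin n → X) (c : Fin n → X) (i : Fin ℓ)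
    (hi : ℓ * ∑ t, dist (a i t) (c t) ^ p ≤ ∑ j, ∑ t, dist (a j t) (c t) ^ p) :
    (∑ j, ∑ t, dist (a i t) (a j t) ^ p) ^ (1 / p) ≤
      2 * (∑ j, ∑ t, dist (a j t) (c t) ^ p) ^ (1 / p) := by
  have hp0 : 0 ≤ p := zero_le_one.trans hp
  have triangle := Lp_dist_triangle (univ : Finset (Fin ℓ × Fin n)) hp
    (fun q => a i q.2) (fun q => c q.2) (fun q => a q.1 q.2)
  simp only [Fintype.sum_prod_type, sum_const, card_univ, Fintype.card_fin, nsmul_eq_mul,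
    dist_comm (c _)] at triangle
  calc (∑ j, ∑ t, dist (a i t) (a j t) ^ p) ^ (1 / p)
      ≤ (ℓ * ∑ t, dist (a i t) (c t) ^ p) ^ (1 / p) +
          (∑ j, ∑ t, dist (a j t) (c t) ^ p) ^ (1 / p) := triangle
    _ ≤ (∑ j, ∑ t, dist (a j t) (c t) ^ p) ^ (1 / p) +
          (∑ j, ∑ t, dist (a j t) (c t) ^ p) ^ (1 / p) := by gcongr
    _ = 2 * (∑ j, ∑ t, dist (a j t) (c t) ^ p) ^ (1 / p) := by ring

end

theorem exists_color_emd_le_two_opt_general {X : Type*} [MetricSpace X] {ℓ n : ℕ}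
    (hℓ : 1 ≤ ℓ) {p : ℝ} (hp : 1 ≤ p)
    (a : Fin ℓ → Fin n → X) (c : Fin n → X) :
    ∃ i : Fin ℓ,
      (∑ j, EMDp p (a i) (a j) ^ p) ^ (1 / p) ≤
        2 * (∑ j, ∑ t, dist (a j t) (c t) ^ p) ^ (1 / p) := by
  have : Nonempty (Fin ℓ) := ⟨⟨0, hℓ⟩⟩
  obtain ⟨i, hi⟩ := Finite.exists_min fun j => ∑ t, dist (a j t) (c t) ^ p
  have hcard : ℓ * ∑ t, dist (a i t) (c t) ^ p ≤ ∑ j, ∑ t, dist (a j t) (c t) ^ p := by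
    simpa using sum_le_sum fun j (_ : j ∈ univ) => hi j
  refine ⟨i, le_trans ?_ (sum_dist_rpow_le_two_mul_of_card_mul_le hp a c i hcard)⟩
  gcongr with j
  · exact sum_nonneg fun j _ => Real.rpow_nonneg (EMDp_nonneg p (a i) (a j)) p
  · exact EMDp_rpow_le_sum_dist_rpow (by linarith) (a i) (a j)

/-- Given a balanced colored point configuration `a` and an aligned fair clustering
with center map `c` of `p`-cost `OPT`, there is a color `i` whose aggregated
Earth Mover's distance to all colors is at most `2 · OPT`. -/
theorem exists_color_emd_le_two_opt {X : Type*} [MetricSpace X] {ℓ n : ℕ}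
    (hℓ : 1 ≤ ℓ) (hn : 1 ≤ n) {p : ℝ} (hp : 1 ≤ p)
    (a : Fin ℓ → Fin n → X) (c : Fin n → X) :
    ∃ i : Fin ℓ,
      (∑ j, EMDp p (a i) (a j) ^ p) ^ (1 / p) ≤
        2 * (∑ j, ∑ t, dist (a j t) (c t) ^ p) ^ (1 / p) :=
  exists_color_emd_le_two_opt_general hℓ hp a c
end

section
/- Let (X,d) be a metric space, ℓ, n ≥ 1, p ≥ 1 a real number, a : Fin ℓ → Fin n → X a colored point configuration, and c : Fin n → X an aligned fair clustering of p-cost OPT := (Σ_{j : Fin ℓ} Σ_{t : Fin n} d(a j t, c t)^p)^{1/p}. Then there exists a single color i : Fin ℓ satisfying simultaneously: (ℓ · Σ_{t} d(a i t, c t)^p)^{1/p} ≤ OPT, and (Σ_{j : Fin ℓ} EMD_p(a i, a j)^p)^{1/p} ≤ 2·OPT. -/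
/-- Given a balanced colored point configuration `a` and an aligned fair clustering
with center map `c` of `p`-cost `OPT`, there is a single color `i` such that both
`(ℓ · ∑ t, d(a i t, c t)^p)^(1/p) ≤ OPT` and
`(∑ j, EMD_p(a i, a j)^p)^(1/p) ≤ 2·OPT`. -/
theorem exists_color_cheap_and_emd_le_two_opt {X : Type*} [MetricSpace X] {ℓ n : ℕ}
    (hℓ : 1 ≤ ℓ) (hn : 1 ≤ n) {p : ℝ} (hp : 1 ≤ p)
    (a : Fin ℓ → Fin n → X) (c : Fin n → X) :
    ∃ i : Fin ℓ,
      ((ℓ : ℝ) * ∑ t, dist (a i t) (c t) ^ p) ^ (1 / p) ≤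
          (∑ j, ∑ t, dist (a j t) (c t) ^ p) ^ (1 / p) ∧
      (∑ j, EMDp p (a i) (a j) ^ p) ^ (1 / p) ≤
        2 * (∑ j, ∑ t, dist (a j t) (c t) ^ p) ^ (1 / p) := by
  have hp0 : 0 < p := lt_of_lt_of_le one_pos hp
  set S : Fin ℓ → ℝ := fun j => ∑ t, dist (a j t) (c t) ^ p with hS
  have hne : (Finset.univ : Finset (Fin ℓ)).Nonempty := ⟨⟨0, hℓ⟩, Finset.mem_univ _⟩
  obtain ⟨i, -, hmin⟩ := Finset.exists_min_image Finset.univ S hne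
  have hSnn : ∀ j, 0 ≤ S j := fun j =>
    Finset.sum_nonneg fun t _ => Real.rpow_nonneg dist_nonneg p
  have hsum_nn : 0 ≤ ∑ j, S j := Finset.sum_nonneg fun j _ => hSnn j
  have key : (ℓ : ℝ) * S i ≤ ∑ j, S j := by
    calc (ℓ : ℝ) * S i = ∑ _j : Fin ℓ, S i := by
          rw [Finset.sum_const, Finset.card_univ, Fintype.card_fin, nsmul_eq_mul]
      _ ≤ ∑ j, S j := Finset.sum_le_sum fun j _ => hmin j (Finset.mem_univ j)
  have hℓS : 0 ≤ (ℓ : ℝ) * S i := mul_nonneg (Nat.cast_nonneg _) (hSnn i)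
  refine ⟨i, Real.rpow_le_rpow hℓS key (by positivity), ?_⟩
  set A : Fin ℓ → ℝ := fun j => (S j) ^ (1 / p) with hA
  have hAnn : ∀ j, 0 ≤ A j := fun j => Real.rpow_nonneg (hSnn j) _
  have hAp : ∀ j, A j ^ p = S j := fun j => by
    rw [hA, ← Real.rpow_mul (hSnn j), one_div_mul_cancel (ne_of_gt hp0), Real.rpow_one]
  have hEMDnn : ∀ j, 0 ≤ EMDp p (a i) (a j) := fun j =>
    Finset.le_inf' _ _ fun π _ =>
      Real.rpow_nonneg (Finset.sum_nonneg fun t _ => Real.rpow_nonneg dist_nonneg p) _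
  have hEMD : ∀ j, EMDp p (a i) (a j) ≤ A i + A j := by
    intro j
    have h1 : EMDp p (a i) (a j) ≤ (∑ t, dist (a i t) (a j t) ^ p) ^ (1 / p) := by
      have h := Finset.inf'_le
        (fun π : Equiv.Perm (Fin n) => (∑ t, dist (a i t) (a j (π t)) ^ p) ^ (1 / p))
        (Finset.mem_univ (1 : Equiv.Perm (Fin n)))
      simpa only [EMDp, Equiv.Perm.coe_one, id_eq] using h
    have h2 : (∑ t, dist (a i t) (a j t) ^ p) ^ (1 / p)
        ≤ (∑ t, (dist (a i t) (c t) + dist (c t) (a j t)) ^ p) ^ (1 / p) := by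
      refine Real.rpow_le_rpow
        (Finset.sum_nonneg fun t _ => Real.rpow_nonneg dist_nonneg p)
        (Finset.sum_le_sum fun t _ =>
          Real.rpow_le_rpow dist_nonneg (dist_triangle _ _ _) hp0.le)
        (by positivity)
    have h3 : (∑ t, (dist (a i t) (c t) + dist (c t) (a j t)) ^ p) ^ (1 / p)
        ≤ (∑ t, dist (a i t) (c t) ^ p) ^ (1 / p)
          + (∑ t, dist (c t) (a j t) ^ p) ^ (1 / p) :=
      Real.Lp_add_le_of_nonneg Finset.univ hp (fun t _ => dist_nonneg) (fun t _ => dist_nonneg)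
    have h4 : (∑ t, dist (c t) (a j t) ^ p) ^ (1 / p) = A j := by
      rw [hA]
      congr 1
      exact Finset.sum_congr rfl fun t _ => by rw [dist_comm]
    calc EMDp p (a i) (a j) ≤ _ := h1
      _ ≤ _ := h2
      _ ≤ _ := h3
      _ = A i + A j := by rw [h4]
  calc (∑ j, EMDp p (a i) (a j) ^ p) ^ (1 / p)
      ≤ (∑ j, (A i + A j) ^ p) ^ (1 / p) := by
        refine Real.rpow_le_rpow
          (Finset.sum_nonneg fun j _ => Real.rpow_nonneg (hEMDnn j) p)
          (Finset.sum_le_sum fun j _ =>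
            Real.rpow_le_rpow (hEMDnn j) (hEMD j) hp0.le) (by positivity)
    _ ≤ (∑ _j : Fin ℓ, A i ^ p) ^ (1 / p) + (∑ j, A j ^ p) ^ (1 / p) :=
        Real.Lp_add_le_of_nonneg Finset.univ hp (fun j _ => hAnn i) (fun j _ => hAnn j)
    _ = ((ℓ : ℝ) * S i) ^ (1 / p) + (∑ j, S j) ^ (1 / p) := by
        have e1 : ∑ j, A j ^ p = ∑ j, S j := Finset.sum_congr rfl fun j _ => hAp j
        rw [Finset.sum_const, Finset.card_univ, Fintype.card_fin, nsmul_eq_mul, hAp, e1]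
    _ ≤ (∑ j, S j) ^ (1 / p) + (∑ j, S j) ^ (1 / p) := by
        exact add_le_add (Real.rpow_le_rpow hℓS key (by positivity)) le_rfl
    _ = 2 * (∑ j, S j) ^ (1 / p) := by ring
end

section
/- Let (X,d) be a metric space, ℓ, n ≥ 1, p ≥ 1 a real number, a : Fin ℓ → Fin n → X a colored point configuration, and c : Fin n → X an aligned fair clustering of p-cost OPT := (Σ_{j : Fin ℓ} Σ_{t : Fin n} d(a j t, c t)^p)^{1/p}. Then there exist a color i : Fin ℓ and permutations σ j of Fin n (for each j : Fin ℓ) such that (ℓ · Σ_{t} d(a i t, c t)^p)^{1/p} ≤ OPT, and for every map Z : Fin n → X, (Σ_{j : Fin ℓ} Σ_{t : Fin n} d(a j (σ j t), Z t)^p)^{1/p} ≤ (ℓ · Σ_{t} d(a i t, Z t)^p)^{1/p} + 2·OPT. -/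
/-!
Because the clustering is aligned, every color can simply be matched to the cheapest color `i`
by the identity. Two applications of the triangle inequality in `ℓ^p` over `Fin ℓ × Fin n`,
first through the centers `c` and then through the points `a i`, bound the cost of serving all
colors from `Z` by `OPT + (ℓ · ∑ t, d(c t, a i t)^p)^(1/p) + (ℓ · ∑ t, d(a i t, Z t)^p)^(1/p)`,
and the middle term is at most `OPT` since color `i` costs at most the average.
-/

open Finset

lemma Fintype.exists_card_nsmul_le_sum {ι M : Type*} [Fintype ι] [Nonempty ι] [AddCommMonoid M]
    [LinearOrder M] [IsOrderedCancelAddMonoid M] (f : ι → M) :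
    ∃ i, Fintype.card ι • f i ≤ ∑ j, f j := by
  obtain ⟨i, -, hi⟩ := exists_le_of_sum_le (f := fun j => Fintype.card ι • f j)
    (g := fun _ => ∑ j, f j) univ_nonempty (by simp [← smul_sum])
  exact ⟨i, hi⟩

lemma sum_rpow_dist_triangle {X ι : Type*} [PseudoMetricSpace X] [Fintype ι] {p : ℝ}
    (hp : 1 ≤ p) (x y z : ι → X) :
    (∑ i, dist (x i) (z i) ^ p) ^ (1 / p) ≤
      (∑ i, dist (x i) (y i) ^ p) ^ (1 / p) + (∑ i, dist (y i) (z i) ^ p) ^ (1 / p) := by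
  have : Fact (1 ≤ ENNReal.ofReal p) := ⟨by simpa using ENNReal.ofReal_le_ofReal hp⟩
  have hp' : 0 < (ENNReal.ofReal p).toReal := by rw [ENNReal.toReal_ofReal] <;> linarith
  have key := dist_triangle (WithLp.toLp (ENNReal.ofReal p) x) (WithLp.toLp _ y)
    (WithLp.toLp _ z)
  simpa only [PiLp.dist_eq_sum hp', PiLp.toLp_apply,
    ENNReal.toReal_ofReal (zero_le_one.trans hp)] using key

lemma sum_sum_rpow_dist_triangle {X ι κ : Type*} [PseudoMetricSpace X] [Fintype ι] [Fintype κ]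
    {p : ℝ} (hp : 1 ≤ p) (x y z : ι → κ → X) :
    (∑ i, ∑ k, dist (x i k) (z i k) ^ p) ^ (1 / p) ≤
      (∑ i, ∑ k, dist (x i k) (y i k) ^ p) ^ (1 / p) +
        (∑ i, ∑ k, dist (y i k) (z i k) ^ p) ^ (1 / p) := by
  simpa only [Fintype.sum_prod_type] using
    sum_rpow_dist_triangle hp (fun q : ι × κ => x q.1 q.2) (fun q => y q.1 q.2) (fun q => z q.1 q.2)

theorem exists_color_and_matchings_general {X : Type*} [MetricSpace X] {ℓ n : ℕ}
    (hℓ : 1 ≤ ℓ) {p : ℝ} (hp : 1 ≤ p)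
    (a : Fin ℓ → Fin n → X) (c : Fin n → X) :
    ∃ (i : Fin ℓ) (σ : Fin ℓ → Equiv.Perm (Fin n)),
      ((ℓ : ℝ) * ∑ t, dist (a i t) (c t) ^ p) ^ (1 / p) ≤
          (∑ j, ∑ t, dist (a j t) (c t) ^ p) ^ (1 / p) ∧
      ∀ Z : Fin n → X,
        (∑ j, ∑ t, dist (a j (σ j t)) (Z t) ^ p) ^ (1 / p) ≤
          ((ℓ : ℝ) * ∑ t, dist (a i t) (Z t) ^ p) ^ (1 / p) +
            2 * (∑ j, ∑ t, dist (a j t) (c t) ^ p) ^ (1 / p) := by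
  have : Nonempty (Fin ℓ) := ⟨⟨0, hℓ⟩⟩
  set OPT := (∑ j, ∑ t, dist (a j t) (c t) ^ p) ^ (1 / p)
  obtain ⟨i, hi⟩ := Fintype.exists_card_nsmul_le_sum fun j => ∑ t, dist (a j t) (c t) ^ p
  rw [Fintype.card_fin, nsmul_eq_mul] at hi
  have hcheap : ((ℓ : ℝ) * ∑ t, dist (a i t) (c t) ^ p) ^ (1 / p) ≤ OPT :=
    Real.rpow_le_rpow (by positivity) hi (by positivity)
  refine ⟨i, 1, hcheap, fun Z => ?_⟩
  have hc := sum_sum_rpow_dist_triangle hp a (fun _ => c) (fun _ => Z)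
  have hai := sum_sum_rpow_dist_triangle hp (fun (_ : Fin ℓ) => c) (fun _ => a i) (fun _ => Z)
  simp only [sum_const, card_univ, Fintype.card_fin, nsmul_eq_mul, dist_comm (c _) (a i _)]
    at hai
  calc (∑ j, ∑ t, dist (a j ((1 : Equiv.Perm (Fin n)) t)) (Z t) ^ p) ^ (1 / p)
      ≤ OPT + ((ℓ : ℝ) * ∑ t, dist (c t) (Z t) ^ p) ^ (1 / p) := by
        simpa only [Equiv.Perm.coe_one, id, sum_const, card_univ, Fintype.card_fin,
          nsmul_eq_mul] using hc
    _ ≤ OPT + (OPT + ((ℓ : ℝ) * ∑ t, dist (a i t) (Z t) ^ p) ^ (1 / p)) := by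
        grw [hai, hcheap]
    _ = ((ℓ : ℝ) * ∑ t, dist (a i t) (Z t) ^ p) ^ (1 / p) + 2 * OPT := by ring

/-- Given a balanced colored point configuration `a` and an aligned fair clustering
with center map `c` of `p`-cost `OPT`, there are a color `i` and, for each color `j`,
a permutation `σ j` matching color `j` to color `i`, such that `i` is a cheap color
(`(ℓ · ∑ t, d(a i t, c t)^p)^(1/p) ≤ OPT`) and for every center map `Z`, the cost of
assigning `a j (σ j t)` to `Z t` is at most
`(ℓ · ∑ t, d(a i t, Z t)^p)^(1/p) + 2·OPT`. -/
theorem exists_color_and_matchings {X : Type*} [MetricSpace X] {ℓ n : ℕ}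
    (hℓ : 1 ≤ ℓ) (hn : 1 ≤ n) {p : ℝ} (hp : 1 ≤ p)
    (a : Fin ℓ → Fin n → X) (c : Fin n → X) :
    ∃ (i : Fin ℓ) (σ : Fin ℓ → Equiv.Perm (Fin n)),
      ((ℓ : ℝ) * ∑ t, dist (a i t) (c t) ^ p) ^ (1 / p) ≤
          (∑ j, ∑ t, dist (a j t) (c t) ^ p) ^ (1 / p) ∧
      ∀ Z : Fin n → X,
        (∑ j, ∑ t, dist (a j (σ j t)) (Z t) ^ p) ^ (1 / p) ≤
          ((ℓ : ℝ) * ∑ t, dist (a i t) (Z t) ^ p) ^ (1 / p) +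
            2 * (∑ j, ∑ t, dist (a j t) (c t) ^ p) ^ (1 / p) :=
  exists_color_and_matchings_general hℓ hp a c
end

section
/- Let (X,d) be a metric space, ℓ, n, k ≥ 1, p ≥ 1 a real number, a : Fin ℓ → Fin n → X a colored point configuration, and c : Fin n → X an aligned fair clustering of p-cost OPT := (Σ_{j : Fin ℓ} Σ_{t : Fin n} d(a j t, c t)^p)^{1/p}, where c takes at most k distinct values (so OPT is the p-cost of a fair k-clustering). Let α ≥ 1 and suppose Z : Fin ℓ → Fin n → X is such that for every color i, Z i takes at most k distinct values and (Σ_{t} d(a i t, Z i t)^p)^{1/p} ≤ α · (Σ_{t} d(a i t, W t)^p)^{1/p} for every W : Fin n → X taking at most k distinct values (i.e., Z i is an α-approximate unconstrained k-clustering of the points of color i). Then there exists F : Fin ℓ × Fin n → X taking at most k distinct values, with balanced fibers, such that (Σ_{j : Fin ℓ} Σ_{t : Fin n} d(a j t, F (j,t))^p)^{1/p} ≤ (α + 2)·OPT. -/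
/-- A map takes at most `k` distinct values. -/
def AtMostKValues {α β : Type*} (k : ℕ) (f : α → β) : Prop :=
  ∃ S : Finset β, S.card ≤ k ∧ ∀ x, f x ∈ S

/-- A map `F : Fin ℓ × Fin n → C` has balanced fibers: for every value `x` and all
colors `j, j'`, the number of indices `t` with `F (j,t) = x` equals the number of
indices `t` with `F (j',t) = x`. -/
def BalancedFibers {C : Type*} {ℓ n : ℕ} (F : Fin ℓ × Fin n → C) : Prop :=
  ∀ (x : C) (j j' : Fin ℓ),
    Nat.card {t : Fin n // F (j, t) = x} = Nat.card {t : Fin n // F (j', t) = x}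

/-- Reduction from fair `(k,p)`-clustering to unconstrained `(k,p)`-clustering:
given an aligned fair `k`-clustering `c` of cost `OPT` and, for every color `i`, an
`α`-approximate unconstrained `k`-clustering `Z i` of the points of color `i`, there
is a fair assignment `F` with at most `k` centers of cost at most `(α + 2)·OPT`. -/
theorem fair_to_unfair_reduction {X : Type*} [MetricSpace X] {ℓ n k : ℕ}
    (hℓ : 1 ≤ ℓ) (hn : 1 ≤ n) (hk : 1 ≤ k) {p : ℝ} (hp : 1 ≤ p)
    (a : Fin ℓ → Fin n → X) (c : Fin n → X) (hc : AtMostKValues k c)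
    (α : ℝ) (hα : 1 ≤ α) (Z : Fin ℓ → Fin n → X)
    (hZk : ∀ i, AtMostKValues k (Z i))
    (hZ : ∀ (i : Fin ℓ) (W : Fin n → X), AtMostKValues k W →
      (∑ t, dist (a i t) (Z i t) ^ p) ^ (1 / p) ≤
        α * (∑ t, dist (a i t) (W t) ^ p) ^ (1 / p)) :
    ∃ F : Fin ℓ × Fin n → X, AtMostKValues k F ∧ BalancedFibers F ∧
      (∑ j, ∑ t, dist (a j t) (F (j, t)) ^ p) ^ (1 / p) ≤
        (α + 2) * (∑ j, ∑ t, dist (a j t) (c t) ^ p) ^ (1 / p) := by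
  have hp0 : (0 : ℝ) < p := lt_of_lt_of_le one_pos hp
  set cost : Fin ℓ → ℝ := fun j => ∑ t, dist (a j t) (c t) ^ p with hcost_def
  have hcost_nonneg : ∀ j, 0 ≤ cost j := fun j =>
    Finset.sum_nonneg fun t _ => Real.rpow_nonneg dist_nonneg p
  obtain ⟨i₀, -, hi₀⟩ := Finset.exists_min_image Finset.univ cost
    ⟨⟨0, hℓ⟩, Finset.mem_univ _⟩
  set S : ℝ := ∑ j, cost j with hS_def
  have hS_nonneg : 0 ≤ S := Finset.sum_nonneg fun j _ => hcost_nonneg j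
  have hℓcost : (ℓ : ℝ) * cost i₀ ≤ S := by
    calc (ℓ : ℝ) * cost i₀ = ∑ _j : Fin ℓ, cost i₀ := by
          simp [Finset.sum_const, mul_comm]
      _ ≤ S := Finset.sum_le_sum fun j _ => hi₀ j (Finset.mem_univ j)
  have hinv : ∀ x : ℝ, 0 ≤ x → (x ^ (1 / p)) ^ p = x := fun x hx => by
    rw [one_div, Real.rpow_inv_rpow hx hp0.ne']
  refine ⟨fun jt => Z i₀ jt.2, ?_, ?_, ?_⟩
  · obtain ⟨T, hT, hTm⟩ := hZk i₀
    exact ⟨T, hT, fun x => hTm x.2⟩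
  · intro x j j'; rfl
  -- cost bound
  -- three functions on the product type
  set f₁ : Fin ℓ × Fin n → ℝ := fun x => dist (a x.1 x.2) (c x.2) with hf₁
  set f₂ : Fin ℓ × Fin n → ℝ := fun x => dist (c x.2) (a i₀ x.2) with hf₂
  set f₃ : Fin ℓ × Fin n → ℝ := fun x => dist (a i₀ x.2) (Z i₀ x.2) with hf₃
  have hnn₁ : ∀ x ∈ Finset.univ (α := Fin ℓ × Fin n), 0 ≤ f₁ x := fun x _ => dist_nonneg
  have hnn₂ : ∀ x ∈ Finset.univ (α := Fin ℓ × Fin n), 0 ≤ f₂ x := fun x _ => dist_nonneg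
  have hnn₃ : ∀ x ∈ Finset.univ (α := Fin ℓ × Fin n), 0 ≤ f₃ x := fun x _ => dist_nonneg
  have hnn₂₃ : ∀ x ∈ Finset.univ (α := Fin ℓ × Fin n), 0 ≤ f₂ x + f₃ x :=
    fun x hx => add_nonneg (hnn₂ x hx) (hnn₃ x hx)
  -- rewrite the double sums as sums over the product type
  have hLHS : (∑ j, ∑ t, dist (a j t) (Z i₀ t) ^ p)
      = ∑ x : Fin ℓ × Fin n, dist (a x.1 x.2) (Z i₀ x.2) ^ p := by
    rw [Fintype.sum_prod_type]
  have hRHS : (∑ j, ∑ t, dist (a j t) (c t) ^ p) = S := rfl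
  have hf₁S : (∑ x : Fin ℓ × Fin n, f₁ x ^ p) = S := by
    rw [Fintype.sum_prod_type]
  have hf₂S : (∑ x : Fin ℓ × Fin n, f₂ x ^ p) ≤ S := by
    rw [Fintype.sum_prod_type]
    calc (∑ _j : Fin ℓ, ∑ t, dist (c t) (a i₀ t) ^ p)
        = (ℓ : ℝ) * cost i₀ := by
          simp only [Finset.sum_const, Finset.card_univ, Fintype.card_fin, nsmul_eq_mul]
          congr 1
          exact Finset.sum_congr rfl fun t _ => by rw [dist_comm]
      _ ≤ S := hℓcost
  have hf₃S : (∑ x : Fin ℓ × Fin n, f₃ x ^ p) ≤ α ^ p * S := by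
    rw [Fintype.sum_prod_type]
    have h1 : (∑ t, dist (a i₀ t) (Z i₀ t) ^ p) ≤ α ^ p * cost i₀ := by
      have h2 := hZ i₀ c hc
      have h3 : (0 : ℝ) ≤ (∑ t, dist (a i₀ t) (Z i₀ t) ^ p) ^ (1 / p) :=
        Real.rpow_nonneg (Finset.sum_nonneg fun t _ => Real.rpow_nonneg dist_nonneg p) _
      have h4 := Real.rpow_le_rpow h3 h2 hp0.le
      rwa [hinv _ (Finset.sum_nonneg fun t _ => Real.rpow_nonneg dist_nonneg p),
        Real.mul_rpow (by positivity) (Real.rpow_nonneg (hcost_nonneg i₀) _),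
        hinv _ (hcost_nonneg i₀)] at h4
    calc (∑ _j : Fin ℓ, ∑ t, dist (a i₀ t) (Z i₀ t) ^ p)
        = (ℓ : ℝ) * ∑ t, dist (a i₀ t) (Z i₀ t) ^ p := by
          simp [Finset.sum_const, mul_comm]
      _ ≤ (ℓ : ℝ) * (α ^ p * cost i₀) := by
          apply mul_le_mul_of_nonneg_left h1 (Nat.cast_nonneg ℓ)
      _ = α ^ p * ((ℓ : ℝ) * cost i₀) := by ring
      _ ≤ α ^ p * S := by
          apply mul_le_mul_of_nonneg_left hℓcost (by positivity)
  -- Minkowski twice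
  have htri : ∀ x : Fin ℓ × Fin n,
      dist (a x.1 x.2) (Z i₀ x.2) ≤ f₁ x + (f₂ x + f₃ x) := fun x => by
    calc dist (a x.1 x.2) (Z i₀ x.2)
        ≤ dist (a x.1 x.2) (c x.2) + dist (c x.2) (Z i₀ x.2) := dist_triangle _ _ _
      _ ≤ dist (a x.1 x.2) (c x.2) +
          (dist (c x.2) (a i₀ x.2) + dist (a i₀ x.2) (Z i₀ x.2)) := by
          gcongr; exact dist_triangle _ _ _
  have step1 : (∑ x : Fin ℓ × Fin n, dist (a x.1 x.2) (Z i₀ x.2) ^ p) ^ (1 / p)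
      ≤ (∑ x : Fin ℓ × Fin n, (f₁ x + (f₂ x + f₃ x)) ^ p) ^ (1 / p) := by
    apply Real.rpow_le_rpow (Finset.sum_nonneg fun x _ => Real.rpow_nonneg dist_nonneg p)
      (Finset.sum_le_sum fun x _ => Real.rpow_le_rpow dist_nonneg (htri x) hp0.le)
      (by positivity)
  have step2 := Real.Lp_add_le_of_nonneg (s := Finset.univ) (f := f₁)
    (g := fun x => f₂ x + f₃ x) hp hnn₁ hnn₂₃
  have step3 := Real.Lp_add_le_of_nonneg (s := Finset.univ) (f := f₂) (g := f₃) hp hnn₂ hnn₃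
  have hmono : ∀ u v : ℝ, 0 ≤ u → u ≤ v → u ^ (1 / p) ≤ v ^ (1 / p) := fun u v hu huv =>
    Real.rpow_le_rpow hu huv (by positivity)
  have hb₁ : (∑ x : Fin ℓ × Fin n, f₁ x ^ p) ^ (1 / p) = S ^ (1 / p) := by rw [hf₁S]
  have hb₂ : (∑ x : Fin ℓ × Fin n, f₂ x ^ p) ^ (1 / p) ≤ S ^ (1 / p) :=
    hmono _ _ (Finset.sum_nonneg fun x _ => Real.rpow_nonneg dist_nonneg p) hf₂S
  have hb₃ : (∑ x : Fin ℓ × Fin n, f₃ x ^ p) ^ (1 / p) ≤ α * S ^ (1 / p) := by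
    have := hmono _ _ (Finset.sum_nonneg fun x _ => Real.rpow_nonneg dist_nonneg p) hf₃S
    rwa [Real.mul_rpow (by positivity) hS_nonneg, one_div,
      Real.rpow_rpow_inv (by positivity : (0:ℝ) ≤ α) hp0.ne', ← one_div] at this
  calc (∑ j, ∑ t, dist (a j t) (Z i₀ t) ^ p) ^ (1 / p)
      = (∑ x : Fin ℓ × Fin n, dist (a x.1 x.2) (Z i₀ x.2) ^ p) ^ (1 / p) := by rw [hLHS]
    _ ≤ (∑ x : Fin ℓ × Fin n, (f₁ x + (f₂ x + f₃ x)) ^ p) ^ (1 / p) := step1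
    _ ≤ (∑ x : Fin ℓ × Fin n, f₁ x ^ p) ^ (1 / p) +
        (∑ x : Fin ℓ × Fin n, (f₂ x + f₃ x) ^ p) ^ (1 / p) := step2
    _ ≤ (∑ x : Fin ℓ × Fin n, f₁ x ^ p) ^ (1 / p) +
        ((∑ x : Fin ℓ × Fin n, f₂ x ^ p) ^ (1 / p) +
         (∑ x : Fin ℓ × Fin n, f₃ x ^ p) ^ (1 / p)) := by gcongr
    _ ≤ S ^ (1 / p) + (S ^ (1 / p) + α * S ^ (1 / p)) := by
        rw [hb₁]; gcongr
    _ = (α + 2) * S ^ (1 / p) := by ring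
    _ = (α + 2) * (∑ j, ∑ t, dist (a j t) (c t) ^ p) ^ (1 / p) := by rw [hRHS]
end

section
/- Let (X,d) be a metric space, ℓ, n ≥ 1, a : Fin ℓ → Fin n → X a colored point configuration, and c : Fin n → X an aligned fair clustering with radius OPT∞ := max_{j : Fin ℓ, t : Fin n} d(a j t, c t). Then for every color i : Fin ℓ and every map Z : Fin n → X, max_{j : Fin ℓ, t : Fin n} d(a j t, Z t) ≤ max_{t : Fin n} d(a i t, Z t) + 2·OPT∞. In particular, if Z takes at most k distinct values and max_{t} d(a i t, Z t) ≤ α · max_{t} d(a i t, c t) for some α ≥ 1, then the fair clustering assigning each point a j t to the center Z t uses at most k centers, has balanced clusters, and has radius at most (α + 2)·OPT∞. -/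
/-- The `k`-center version of the reduction: for an aligned fair clustering `c` of
radius `OPT∞`, every color `i` and every center map `Z` satisfy
`max_{j,t} d(a j t, Z t) ≤ max_t d(a i t, Z t) + 2·OPT∞`; in particular, if `Z` has at
most `k` distinct values and is an `α`-approximation on color `i`, then assigning
`a j t` to `Z t` uses at most `k` centers, is balanced, and has radius `(α+2)·OPT∞`. -/
theorem fair_center_reduction {X : Type*} [MetricSpace X] {ℓ n : ℕ}
    (hℓ : 1 ≤ ℓ) (hn : 1 ≤ n)
    (a : Fin ℓ → Fin n → X) (c : Fin n → X) :
    ∀ (i : Fin ℓ) (Z : Fin n → X),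
      (Finset.univ.sup' ⟨(⟨0, hℓ⟩, ⟨0, hn⟩), Finset.mem_univ _⟩
          (fun jt : Fin ℓ × Fin n => dist (a jt.1 jt.2) (Z jt.2))) ≤
        (Finset.univ.sup' ⟨⟨0, hn⟩, Finset.mem_univ _⟩
            (fun t : Fin n => dist (a i t) (Z t))) +
          2 * (Finset.univ.sup' ⟨(⟨0, hℓ⟩, ⟨0, hn⟩), Finset.mem_univ _⟩
              (fun jt : Fin ℓ × Fin n => dist (a jt.1 jt.2) (c jt.2))) ∧
      ∀ (k : ℕ) (α : ℝ), 1 ≤ α → AtMostKValues k Z →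
        (Finset.univ.sup' ⟨⟨0, hn⟩, Finset.mem_univ _⟩
            (fun t : Fin n => dist (a i t) (Z t))) ≤
          α * (Finset.univ.sup' ⟨⟨0, hn⟩, Finset.mem_univ _⟩
              (fun t : Fin n => dist (a i t) (c t))) →
        AtMostKValues k (fun jt : Fin ℓ × Fin n => Z jt.2) ∧
        BalancedFibers (fun jt : Fin ℓ × Fin n => Z jt.2) ∧
        (Finset.univ.sup' ⟨(⟨0, hℓ⟩, ⟨0, hn⟩), Finset.mem_univ _⟩
            (fun jt : Fin ℓ × Fin n => dist (a jt.1 jt.2) (Z jt.2))) ≤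
          (α + 2) * (Finset.univ.sup' ⟨(⟨0, hℓ⟩, ⟨0, hn⟩), Finset.mem_univ _⟩
              (fun jt : Fin ℓ × Fin n => dist (a jt.1 jt.2) (c jt.2))) := by

  intro i Z
  have hOPT0 : (0:ℝ) ≤ Finset.univ.sup' ⟨((⟨0, hℓ⟩ : Fin ℓ), (⟨0, hn⟩ : Fin n)), Finset.mem_univ _⟩
      (fun jt : Fin ℓ × Fin n => dist (a jt.1 jt.2) (c jt.2)) :=
    le_trans dist_nonneg (Finset.le_sup' (fun jt : Fin ℓ × Fin n => dist (a jt.1 jt.2) (c jt.2)) (Finset.mem_univ ((⟨0, hℓ⟩ : Fin ℓ), (⟨0, hn⟩ : Fin n))))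
  have hcOPT : ∀ jt : Fin ℓ × Fin n, dist (a jt.1 jt.2) (c jt.2) ≤
      Finset.univ.sup' ⟨((⟨0, hℓ⟩ : Fin ℓ), (⟨0, hn⟩ : Fin n)), Finset.mem_univ _⟩
        (fun jt : Fin ℓ × Fin n => dist (a jt.1 jt.2) (c jt.2)) :=
    fun jt => Finset.le_sup' (fun jt : Fin ℓ × Fin n => dist (a jt.1 jt.2) (c jt.2)) (Finset.mem_univ jt)
  have hZsup : ∀ t : Fin n, dist (a i t) (Z t) ≤
      Finset.univ.sup' ⟨(⟨0, hn⟩ : Fin n), Finset.mem_univ _⟩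
        (fun t : Fin n => dist (a i t) (Z t)) :=
    fun t => Finset.le_sup' (fun t : Fin n => dist (a i t) (Z t)) (Finset.mem_univ t)
  have main : (Finset.univ.sup' ⟨((⟨0, hℓ⟩ : Fin ℓ), (⟨0, hn⟩ : Fin n)), Finset.mem_univ _⟩
      (fun jt : Fin ℓ × Fin n => dist (a jt.1 jt.2) (Z jt.2))) ≤
      (Finset.univ.sup' ⟨(⟨0, hn⟩ : Fin n), Finset.mem_univ _⟩
        (fun t : Fin n => dist (a i t) (Z t))) +
      2 * (Finset.univ.sup' ⟨((⟨0, hℓ⟩ : Fin ℓ), (⟨0, hn⟩ : Fin n)), Finset.mem_univ _⟩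
        (fun jt : Fin ℓ × Fin n => dist (a jt.1 jt.2) (c jt.2))) := by
    refine Finset.sup'_le _ _ fun jt _ => ?_
    obtain ⟨j, t⟩ := jt
    have h1 : dist (a j t) (Z t) ≤ dist (a j t) (c t) + dist (c t) (a i t) + dist (a i t) (Z t) :=
      dist_triangle4 _ _ _ _
    have h2 := hcOPT (j, t)
    have h3 := hcOPT (i, t)
    have h4 := hZsup t
    rw [dist_comm (c t) (a i t)] at h1
    simp only at h1 h2 h3 h4 ⊢
    linarith
  refine ⟨main, ?_⟩
  rintro k α hα ⟨S, hS, hSmem⟩ happrox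
  refine ⟨⟨S, hS, fun jt => hSmem jt.2⟩, fun x j j' => rfl, ?_⟩
  have hiOPT : (Finset.univ.sup' ⟨(⟨0, hn⟩ : Fin n), Finset.mem_univ _⟩
      (fun t : Fin n => dist (a i t) (c t))) ≤
      Finset.univ.sup' ⟨((⟨0, hℓ⟩ : Fin ℓ), (⟨0, hn⟩ : Fin n)), Finset.mem_univ _⟩
        (fun jt : Fin ℓ × Fin n => dist (a jt.1 jt.2) (c jt.2)) :=
    Finset.sup'_le _ _ fun t _ => hcOPT (i, t)
  have := mul_le_mul_of_nonneg_left hiOPT (le_trans zero_le_one hα)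
  nlinarith [main, happrox]
end

section
/- Let (X,d) be a metric space, A ⊆ X a nonempty finite set, k ≥ 1, and R ≥ 0. Suppose m : X → Fin k and o : Fin k → X satisfy o j ∈ A for all j and d(p, o (m p)) ≤ R for every p ∈ A (so A is partitioned into the k clusters O_j = {p ∈ A : m p = j}, each contained in the ball of radius R around its center o j ∈ A). Let c : Fin k → X be a farthest-first traversal of A: c i ∈ A for all i, and for every i : Fin k with i ≥ 1 and every q ∈ A, min_{m' < i} d(q, c m') ≤ min_{m' < i} d(c i, c m'). Then there exists g : Fin k → Fin k such that d(p, c (g (m p))) ≤ 3R for every p ∈ A. Consequently, assigning each cluster O_j wholly to the center c (g j) yields a clustering of A with at most k centers, all taken from the farthest-first traversal, of radius at most 3R, whose clusters are unions of the O_j and hence are balanced whenever each O_j is balanced. -/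
/-- Farthest-first traversal gives centers inducing a `3`-approximate fair `k`-center
clustering: if `A` is covered by `k` clusters (given by `m`, with centers `o j ∈ A`)
of radius `R`, and `c` is a farthest-first traversal of `A`, then each cluster can be
assigned wholly to a traversal center (`g`) so that every point is within `3R` of its
assigned center. -/
theorem farthest_first_three_approx {X : Type*} [MetricSpace X]
    (A : Finset X) (hA : A.Nonempty) {k : ℕ} (hk : 1 ≤ k) (R : ℝ) (hR : 0 ≤ R)
    (m : X → Fin k) (o : Fin k → X) (ho : ∀ j : Fin k, o j ∈ A)
    (hcover : ∀ p ∈ A, dist p (o (m p)) ≤ R)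
    (c : Fin k → X) (hcA : ∀ i : Fin k, c i ∈ A)
    (hff : ∀ i : Fin k, 1 ≤ (i : ℕ) → ∀ q ∈ A,
      (⨅ m' : {m' : Fin k // m' < i}, dist q (c m'.1)) ≤
        ⨅ m' : {m' : Fin k // m' < i}, dist (c i) (c m'.1)) :
    ∃ g : Fin k → Fin k, ∀ p ∈ A, dist p (c (g (m p))) ≤ 3 * R := by
  have key : ∀ j : Fin k, ∃ i : Fin k, dist (o j) (c i) ≤ 2 * R := by
    by_cases hinj : Function.Injective (fun i => m (c i))
    · intro j
      obtain ⟨i, hi⟩ := Finite.surjective_of_injective hinj j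
      refine ⟨i, ?_⟩
      have h1 := hcover (c i) (hcA i)
      simp only at hi
      rw [hi] at h1
      rw [dist_comm]
      linarith
    · rw [Function.not_injective_iff] at hinj
      obtain ⟨a, b, hab, hne⟩ := hinj
      -- wlog a < b
      obtain ⟨i₁, i₂, h12, heq⟩ : ∃ i₁ i₂ : Fin k, i₁ < i₂ ∧ m (c i₁) = m (c i₂) := by
        rcases lt_or_gt_of_ne hne with h | h
        · exact ⟨a, b, h, hab⟩
        · exact ⟨b, a, h, hab.symm⟩
      have hi₂ : 1 ≤ (i₂ : ℕ) := by
        have : (i₁ : ℕ) < (i₂ : ℕ) := h12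
        omega
      haveI : Nonempty {m' : Fin k // m' < i₂} := ⟨⟨i₁, h12⟩⟩
      have hbdd : ∀ q : X, BddBelow (Set.range fun m' : {m' : Fin k // m' < i₂} =>
          dist q (c m'.1)) := by
        intro q
        exact ⟨0, by rintro _ ⟨x, rfl⟩; exact dist_nonneg⟩
      have h2R : (⨅ m' : {m' : Fin k // m' < i₂}, dist (c i₂) (c m'.1)) ≤ 2 * R := by
        refine le_trans (ciInf_le (hbdd _) ⟨i₁, h12⟩) ?_
        have h1 := hcover (c i₂) (hcA i₂)
        have h2 := hcover (c i₁) (hcA i₁)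
        rw [heq] at h2
        calc dist (c i₂) (c i₁) ≤ dist (c i₂) (o (m (c i₂))) + dist (o (m (c i₂))) (c i₁) :=
              dist_triangle _ _ _
          _ ≤ R + R := by rw [dist_comm (o (m (c i₂)))]; exact add_le_add h1 h2
          _ = 2 * R := by ring
      intro j
      have hle : (⨅ m' : {m' : Fin k // m' < i₂}, dist (o j) (c m'.1)) ≤ 2 * R :=
        le_trans (hff i₂ hi₂ (o j) (ho j)) h2R
      obtain ⟨x, hx⟩ := Finite.exists_min
        (fun m' : {m' : Fin k // m' < i₂} => dist (o j) (c m'.1))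
      refine ⟨x.1, ?_⟩
      exact le_trans (le_ciInf hx) hle
  choose g hg using key
  refine ⟨fun j => g j, fun p hp => ?_⟩
  calc dist p (c (g (m p))) ≤ dist p (o (m p)) + dist (o (m p)) (c (g (m p))) :=
        dist_triangle _ _ _
    _ ≤ R + 2 * R := add_le_add (hcover p hp) (hg (m p))
    _ = 3 * R := by ring
end
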